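/- Let 1 < p < ∞, v a weight with N := sup_n v_{n+1}/v_n < ∞, and r, s nonzero reals with |r| + N|s| ≤ 1. Then B(r,s) is power bounded on l_p(v), and since l_p(v) is reflexive, B(r,s) is mean ergodic on l_p(v). -/

import Mathlib

/-!
Write `T = r + S`, where `S` is the weighted forward shift with weights `s v_{n+1} / v_n`; then
`‖T‖ ≤ |r| + N|s| ≤ 1`, so `T` is power bounded. For a contraction the Cesàro means tend to `0`
on the closure of the range of `1 - T`, so it suffices that `1 - T = (1 - r)(1 - V)` has dense
range, where `V = S / (1 - r)` is a weighted shift with weights of modulus at most `1`. The Cesàro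
means of `V` at a unit vector `e_k` average `n` disjointly supported vectors of norm at most `1`,
so their norm is at most `n^{1/p - 1} → 0` because `p > 1`; conversely, `x` minus its `n`-th
Cesàro mean always lies in the range of `1 - V`, so every `e_k`, hence all of `ℓ^p`, lies in the
closure of that range.
-/

open scoped ENNReal
open Filter Topology Finset

section MeanErgodic

variable {𝕜 E : Type*} [RCLike 𝕜] [NormedAddCommGroup E] [NormedSpace 𝕜 E]

theorem ContinuousLinearMap.norm_pow_le_one {f : E →L[𝕜] E} (hf : ‖f‖ ≤ 1) (n : ℕ) :
    ‖f ^ n‖ ≤ 1 := by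
  rcases n.eq_zero_or_pos with rfl | hn
  · exact ContinuousLinearMap.norm_id_le
  · exact (norm_pow_le' f hn).trans (pow_le_one₀ (norm_nonneg f) hf)

theorem ContinuousLinearMap.tendsto_birkhoffAverage_zero_of_denseRange (f : E →L[𝕜] E)
    (hf : ‖f‖ ≤ 1) (hd : DenseRange ⇑(1 - f)) (x : E) :
    Tendsto (birkhoffAverage 𝕜 f id · x) atTop (𝓝 0) := by
  have hlip : LipschitzWith 1 f := f.lipschitz.weaken (show ‖f‖₊ ≤ 1 from hf)
  have hclosed : IsClosed {x | Tendsto (birkhoffAverage 𝕜 f id · x) atTop (𝓝 0)} :=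
    isClosed_setOfPred_tendsto_birkhoffAverage 𝕜 hlip uniformContinuous_id continuous_const
  refine closure_minimal (Set.forall_mem_range.2 fun y ↦ ?_) hclosed (hd x)
  have hbdd : Bornology.IsBounded (Set.range (id <| f^[·] y)) :=
    isBounded_iff_forall_norm_le.2 ⟨‖y‖, Set.forall_mem_range.2 fun n ↦ by
      simpa using (hlip.iterate n).dist_le_mul y 0⟩
  simpa [birkhoffAverage, birkhoffSum, Finset.sum_sub_distrib, smul_sub, iterate_map_sub]
    using (tendsto_birkhoffAverage_apply_sub_birkhoffAverage 𝕜 hbdd).neg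

theorem ContinuousLinearMap.one_sub_apply_birkhoffSum (f : E →L[𝕜] E) (n : ℕ) (x : E) :
    (1 - f) (birkhoffSum f id n x) = x - f^[n] x := by
  induction n with
  | zero => simp
  | succ n ih =>
    rw [birkhoffSum_succ, map_add, ih, Function.iterate_succ_apply']
    simp only [id, sub_apply, one_apply_eq_self]
    abel

theorem ContinuousLinearMap.mem_closure_range_one_sub_of_tendsto_birkhoffAverage
    (f : E →L[𝕜] E) {x : E} (hx : Tendsto (birkhoffAverage 𝕜 f id · x) atTop (𝓝 0)) :
    x ∈ closure (Set.range ⇑(1 - f)) := by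
  refine mem_closure_of_tendsto (by simpa using hx.const_sub x) ?_
  filter_upwards [eventually_ne_atTop 0] with n hn
  -- `1 - f` maps the mean of the first `n` Birkhoff sums to `x - birkhoffAverage 𝕜 f id n x`.
  refine ⟨(n : 𝕜)⁻¹ • ∑ m ∈ range n, birkhoffSum f id m x, ?_⟩
  have hn' : (n : 𝕜) ≠ 0 := Nat.cast_ne_zero.2 hn
  rw [map_smul, map_sum]
  simp_rw [one_sub_apply_birkhoffSum]
  rw [sum_sub_distrib, sum_const, card_range, smul_sub, ← Nat.cast_smul_eq_nsmul 𝕜, smul_smul,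
    inv_mul_cancel₀ hn', one_smul]
  rfl

end MeanErgodic

section WeightedShift

variable {𝕜 : Type*} [RCLike 𝕜] {p : ℝ≥0∞} [Fact (1 ≤ p)]

def IsWeightedShift (S : lp (fun _ : ℕ => 𝕜) p →L[𝕜] lp (fun _ : ℕ => 𝕜) p) (a : ℕ → 𝕜) :
    Prop :=
  ∀ y, S y 0 = 0 ∧ ∀ n, S y (n + 1) = a n * y n

theorem lp.norm_sum_single_add_le (hp : 0 < p.toReal) (k n : ℕ) {c : ℕ → 𝕜}
    (hc : ∀ j, ‖c j‖ ≤ 1) :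
    ‖∑ j ∈ range n, (lp.single p (k + j) (c j) : lp (fun _ : ℕ => 𝕜) p)‖ ≤
      (n : ℝ) ^ p.toReal⁻¹ := by
  have hsum : ∑ j ∈ range n, (lp.single p (k + j) (c j) : lp (fun _ : ℕ => 𝕜) p)
      = ∑ i ∈ (range n).map (addLeftEmbedding k), lp.single p i (c (i - k)) := by
    simp [sum_map]
  rw [Real.le_rpow_inv_iff_of_pos (norm_nonneg _) n.cast_nonneg hp, hsum,
    lp.norm_sum_single hp, sum_map]
  calc ∑ j ∈ range n, ‖c (addLeftEmbedding k j - k)‖ ^ p.toReal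
      ≤ ∑ _j ∈ range n, (1 : ℝ) := by
        gcongr with j
        simpa using Real.rpow_le_one (norm_nonneg _) (hc j) hp.le
    _ = n := by simp

theorem isWeightedShift_sub_smul_one {T : lp (fun _ : ℕ => 𝕜) p →L[𝕜] lp (fun _ : ℕ => 𝕜) p}
    {a : ℕ → 𝕜} {c : 𝕜}
    (hT : ∀ y, T y 0 = c * y 0 ∧ ∀ n, T y (n + 1) = a n * y n + c * y (n + 1)) :
    IsWeightedShift (T - c • 1) a := fun y ↦ by
  have hTy : (T - c • 1) y = T y - c • y := rfl
  simp only [hTy, lp.coeFn_sub, lp.coeFn_smul, Pi.sub_apply, Pi.smul_apply, smul_eq_mul]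
  exact ⟨by rw [(hT y).1, sub_self], fun n ↦ by rw [(hT y).2 n, add_sub_cancel_right]⟩

namespace IsWeightedShift

variable {S : lp (fun _ : ℕ => 𝕜) p →L[𝕜] lp (fun _ : ℕ => 𝕜) p} {a : ℕ → 𝕜}

theorem norm_apply_le (hS : IsWeightedShift S a) (hp : 0 < p.toReal) {c : ℝ} (hc : 0 ≤ c)
    (ha : ∀ n, ‖a n‖ ≤ c) (y : lp (fun _ : ℕ => 𝕜) p) : ‖S y‖ ≤ c * ‖y‖ := by
  have hSy := (lp.memℓp (S y)).summable hp
  have hy := (lp.memℓp y).summable hp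
  have hcoord (n : ℕ) : ‖S y (n + 1)‖ ^ p.toReal ≤ c ^ p.toReal * ‖y n‖ ^ p.toReal := by
    rw [(hS y).2 n, norm_mul, ← Real.mul_rpow hc (norm_nonneg _)]
    gcongr
    exact ha n
  refine lp.norm_le_of_tsum_le hp (by positivity) ?_
  calc ∑' n, ‖S y n‖ ^ p.toReal = ∑' n, ‖S y (n + 1)‖ ^ p.toReal := by
        rw [hSy.tsum_eq_zero_add, (hS y).1, norm_zero, Real.zero_rpow hp.ne', zero_add]
    _ ≤ ∑' n, c ^ p.toReal * ‖y n‖ ^ p.toReal :=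
        (hSy.comp_injective (add_left_injective 1)).tsum_le_tsum hcoord (hy.mul_left _)
    _ = (c * ‖y‖) ^ p.toReal := by
        rw [tsum_mul_left, ← lp.norm_rpow_eq_tsum hp, Real.mul_rpow hc (norm_nonneg _)]

theorem opNorm_le (hS : IsWeightedShift S a) (hp : 0 < p.toReal) {c : ℝ} (hc : 0 ≤ c)
    (ha : ∀ n, ‖a n‖ ≤ c) : ‖S‖ ≤ c :=
  S.opNorm_le_bound hc (hS.norm_apply_le hp hc ha)

theorem norm_smul_one_add_le (hS : IsWeightedShift S a) (hp : 0 < p.toReal) (c : 𝕜) {b : ℝ}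
    (hb : 0 ≤ b) (ha : ∀ n, ‖a n‖ ≤ b) : ‖c • 1 + S‖ ≤ ‖c‖ + b := by
  refine (norm_add_le _ _).trans (add_le_add ?_ (hS.opNorm_le hp hb ha))
  exact norm_smul_le c (1 : lp (fun _ : ℕ => 𝕜) p →L[𝕜] _) |>.trans
    (mul_le_of_le_one_right (norm_nonneg c) ContinuousLinearMap.norm_id_le)

theorem apply_single (hS : IsWeightedShift S a) (m : ℕ) (b : 𝕜) :
    S (lp.single p m b) = lp.single p (m + 1) (a m * b) := by
  ext n
  rcases n with _ | n
  · simp [(hS _).1]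
  · rw [(hS _).2 n, lp.single_apply, lp.single_apply]
    by_cases h : n = m
    · subst h; simp
    · simp [h]

theorem iterate_single (hS : IsWeightedShift S a) (k j : ℕ) :
    S^[j] (lp.single p k 1) = lp.single p (k + j) (∏ i ∈ range j, a (k + i)) := by
  induction j with
  | zero => simp
  | succ j ih =>
    rw [Function.iterate_succ_apply', ih, hS.apply_single, prod_range_succ, mul_comm]
    rfl

theorem smul (hS : IsWeightedShift S a) (c : 𝕜) : IsWeightedShift (c • S) (c • a) := fun y ↦
  ⟨by simp [(hS y).1], fun n ↦ by simp [(hS y).2 n, mul_assoc]⟩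

theorem tendsto_birkhoffAverage_single (hS : IsWeightedShift S a) (hp : 1 < p.toReal)
    (ha : ∀ n, ‖a n‖ ≤ 1) (k : ℕ) :
    Tendsto (birkhoffAverage 𝕜 S id · (lp.single p k 1)) atTop (𝓝 0) := by
  have hp₀ : 0 < p.toReal := one_pos.trans hp
  have hexp : 0 < 1 - p.toReal⁻¹ := sub_pos.2 (inv_lt_one_of_one_lt₀ hp)
  refine squeeze_zero_norm' ?_
    ((tendsto_rpow_neg_atTop hexp).comp tendsto_natCast_atTop_atTop)
  filter_upwards [eventually_ne_atTop 0] with n hn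
  have hprod (j : ℕ) : ‖∏ i ∈ range j, a (k + i)‖ ≤ 1 := by
    rw [norm_prod]
    exact prod_le_one (fun _ _ ↦ norm_nonneg _) fun i _ ↦ ha (k + i)
  have hn' : (0 : ℝ) < n := Nat.cast_pos.2 (Nat.pos_of_ne_zero hn)
  calc ‖birkhoffAverage 𝕜 S id n (lp.single p k 1)‖
      = (n : ℝ)⁻¹ * ‖∑ j ∈ range n,
          (lp.single p (k + j) (∏ i ∈ range j, a (k + i)) : lp (fun _ : ℕ => 𝕜) p)‖ := by
        simp [birkhoffAverage, birkhoffSum, hS.iterate_single, norm_smul]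
    _ ≤ (n : ℝ)⁻¹ * (n : ℝ) ^ p.toReal⁻¹ := by
        gcongr
        exact lp.norm_sum_single_add_le hp₀ k n hprod
    _ = (n : ℝ) ^ (-(1 - p.toReal⁻¹)) := by
        rw [neg_sub, Real.rpow_sub hn', Real.rpow_one, inv_mul_eq_div]

theorem denseRange_one_sub (hS : IsWeightedShift S a) (hp : 1 < p.toReal)
    (ha : ∀ n, ‖a n‖ ≤ 1) : DenseRange ⇑(1 - S) := by
  have hpt : p ≠ ⊤ := by rintro rfl; norm_num at hp
  set R := LinearMap.range (1 - S).toLinearMap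
  have hsingle (k : ℕ) (b : 𝕜) : lp.single p k b ∈ R.topologicalClosure := by
    have h1 : lp.single p k (1 : 𝕜) ∈ R.topologicalClosure := by
      rw [← SetLike.mem_coe, Submodule.topologicalClosure_coe, LinearMap.coe_range]
      exact S.mem_closure_range_one_sub_of_tendsto_birkhoffAverage
        (hS.tendsto_birkhoffAverage_single hp ha k)
    simpa [← lp.single_smul] using R.topologicalClosure.smul_mem b h1
  intro x
  exact R.isClosed_topologicalClosure.mem_of_tendsto (lp.hasSum_single hpt x)
    (Eventually.of_forall fun s ↦ R.topologicalClosure.sum_mem fun i _ ↦ hsingle i _)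

theorem denseRange_smul_one_sub (hS : IsWeightedShift S a) (hp : 1 < p.toReal) {c : 𝕜}
    (hc : c ≠ 0) (ha : ∀ n, ‖a n‖ ≤ ‖c‖) : DenseRange ⇑(c • 1 - S) := by
  have hdense : DenseRange ⇑(1 - c⁻¹ • S) := (hS.smul c⁻¹).denseRange_one_sub hp fun n ↦ by
    rw [Pi.smul_apply, smul_eq_mul, norm_mul, norm_inv]
    exact inv_mul_le_one_of_le₀ (ha n) (norm_nonneg c)
  have hsmul : DenseRange (c • · : lp (fun _ : ℕ => 𝕜) p → lp (fun _ : ℕ => 𝕜) p) :=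
    Function.Surjective.denseRange fun y ↦ ⟨c⁻¹ • y, smul_inv_smul₀ hc y⟩
  have heq : c • 1 - S = c • (1 - c⁻¹ • S) := by rw [smul_sub, smul_inv_smul₀ hc]
  rw [heq]
  exact hsmul.comp hdense (continuous_const_smul c)

end IsWeightedShift

end WeightedShift

theorem stmt12_general (p : ℝ≥0∞) [Fact (1 ≤ p)] (hp1 : 1 < p) (hpt : p ≠ ⊤)
    (v : ℕ → ℝ) (hv : ∀ n, 0 < v n)
    (N : ℝ) (hN : IsLUB (Set.range fun n => v (n + 1) / v n) N)
    (r s : ℝ) (hs : s ≠ 0) (hrs : |r| + N * |s| ≤ 1)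
    (T : lp (fun _ : ℕ => ℂ) p →L[ℂ] lp (fun _ : ℕ => ℂ) p)
    (hT : ∀ x : lp (fun _ : ℕ => ℂ) p,
      (T x : ∀ _ : ℕ, ℂ) 0 = (r : ℂ) * (x : ∀ _ : ℕ, ℂ) 0 ∧
      ∀ n : ℕ, (T x : ∀ _ : ℕ, ℂ) (n + 1)
        = ((s * (v (n + 1) / v n) : ℝ) : ℂ) * (x : ∀ _ : ℕ, ℂ) n
          + (r : ℂ) * (x : ∀ _ : ℕ, ℂ) (n + 1)) :
    (∃ C : ℝ, ∀ n : ℕ, ‖T ^ n‖ ≤ C) ∧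
      ∃ P : lp (fun _ : ℕ => ℂ) p →L[ℂ] lp (fun _ : ℕ => ℂ) p,
        ∀ x, Tendsto (fun n : ℕ =>
          ((n : ℂ))⁻¹ • ∑ m ∈ Finset.range n, (T ^ (m + 1)) x) atTop (nhds (P x)) := by
  have hp : 1 < p.toReal := by
    simpa using (ENNReal.toReal_lt_toReal ENNReal.one_ne_top hpt).2 hp1
  have hS := isWeightedShift_sub_smul_one hT
  have hw (n : ℕ) : ‖((s * (v (n + 1) / v n) : ℝ) : ℂ)‖ ≤ N * |s| := by
    rw [Complex.norm_real, Real.norm_eq_abs, abs_mul, abs_of_pos (div_pos (hv _) (hv _)), mul_comm]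
    exact mul_le_mul_of_nonneg_right (hN.1 ⟨n, rfl⟩) (abs_nonneg s)
  have hNs : 0 < N * |s| :=
    mul_pos ((div_pos (hv 1) (hv 0)).trans_le (hN.1 ⟨0, rfl⟩)) (abs_pos.2 hs)
  have hT1 : ‖T‖ ≤ 1 := by
    have := hS.norm_smul_one_add_le (one_pos.trans hp) (r : ℂ) hNs.le hw
    rw [add_sub_cancel, Complex.norm_real, Real.norm_eq_abs] at this
    linarith
  have h1r : N * |s| ≤ ‖(1 - r : ℂ)‖ := by
    rw [← Complex.ofReal_one, ← Complex.ofReal_sub, Complex.norm_real, Real.norm_eq_abs]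
    linarith [abs_sub_abs_le_abs_sub 1 r, abs_one (α := ℝ)]
  have hdense : DenseRange ⇑(1 - T) := by
    have := hS.denseRange_smul_one_sub hp (norm_pos_iff.1 (hNs.trans_le h1r))
      fun n ↦ (hw n).trans h1r
    rwa [sub_smul, one_smul, sub_sub_sub_cancel_right] at this
  refine ⟨⟨1, ContinuousLinearMap.norm_pow_le_one hT1⟩, 0, fun x ↦ ?_⟩
  simpa [birkhoffAverage, birkhoffSum, Function.iterate_succ_apply]
    using T.tendsto_birkhoffAverage_zero_of_denseRange hT1 hdense (T x)

/-- For `1 < p < ∞`, a weight `v` with `N := sup_n v_{n+1}/v_n < ∞` and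
nonzero reals `r, s` with `|r| + N|s| ≤ 1`, the operator `B(r,s)` is power bounded on
`l_p(v)` and, `l_p(v)` being reflexive, mean ergodic on `l_p(v)`.  As before, `B(r,s)` on
`l_p(v)` is represented via the isometric isomorphism `T_v` by the conjugated operator `T`
on `l_p` with matrix `r` on the diagonal and `s v_{n+1}/v_n` on the subdiagonal. -/
theorem stmt12 (p : ℝ≥0∞) [Fact (1 ≤ p)] (hp1 : 1 < p) (hpt : p ≠ ⊤)
    (v : ℕ → ℝ) (hv : ∀ n, 0 < v n)
    (N : ℝ) (hN : IsLUB (Set.range fun n => v (n + 1) / v n) N)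
    (r s : ℝ) (hr : r ≠ 0) (hs : s ≠ 0) (hrs : |r| + N * |s| ≤ 1)
    (T : lp (fun _ : ℕ => ℂ) p →L[ℂ] lp (fun _ : ℕ => ℂ) p)
    (hT : ∀ x : lp (fun _ : ℕ => ℂ) p,
      (T x : ∀ _ : ℕ, ℂ) 0 = (r : ℂ) * (x : ∀ _ : ℕ, ℂ) 0 ∧
      ∀ n : ℕ, (T x : ∀ _ : ℕ, ℂ) (n + 1)
        = ((s * (v (n + 1) / v n) : ℝ) : ℂ) * (x : ∀ _ : ℕ, ℂ) n
          + (r : ℂ) * (x : ∀ _ : ℕ, ℂ) (n + 1)) :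
    (∃ C : ℝ, ∀ n : ℕ, ‖T ^ n‖ ≤ C) ∧
      ∃ P : lp (fun _ : ℕ => ℂ) p →L[ℂ] lp (fun _ : ℕ => ℂ) p,
        ∀ x, Tendsto (fun n : ℕ =>
          ((n : ℂ))⁻¹ • ∑ m ∈ Finset.range n, (T ^ (m + 1)) x) atTop (nhds (P x)) :=
  stmt12_general p hp1 hpt v hv N hN r s hs hrs T hT
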